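/- Let n ≥ 0, let k ≥ 0 be a natural number, and let k_0, k_1, …, k_n be positive integers; set g = (k+1) + k_0 + k_1 + ⋯ + k_n − n (so g ≥ 2). Then (2g+n−1)!·(2g−1)!!/((2g−1)!·(2k+1)!!·Π_{i=0}^{n}(2k_i−1)!!) = ((2k+2k_0+1)!!/((2k+1)!!·(2k_0−1)!!))·(2g+n−2)!·(2g−1)!!/((2g−1)!·(2k_0+2k−1)!!·Π_{i=1}^{n}(2k_i−1)!!) + Σ_{i=1}^{n} ((2k+2k_i−1)!!/((2k+1)!!·(2k_i−3)!!))·(2g+n−2)!·(2g−1)!!/((2g−1)!·(2(k_i+k)−1)!!·Π_{j∈{0,…,n}, j≠i}(2k_j−1)!!), as an identity of rational numbers. -/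
import Mathlib
set_option maxHeartbeats 1000000

open Finset Nat

/-- The odd double factorial: `oddDoubleFactorial m = (2m−1)!! = ∏_{j=1}^{m} (2j−1)`,
so in particular `oddDoubleFactorial 0 = (−1)!! = 1`. -/
def oddDoubleFactorial (m : ℕ) : ℕ := ∏ j ∈ Finset.range m, (2 * j + 1)

lemma odf_pos (m : ℕ) : 0 < oddDoubleFactorial m :=
  Finset.prod_pos (fun j _ => by omega)

lemma odf_ne (m : ℕ) : (oddDoubleFactorial m : ℚ) ≠ 0 := by
  exact_mod_cast (odf_pos m).ne'

lemma odf_succ (m : ℕ) : oddDoubleFactorial (m + 1) = oddDoubleFactorial m * (2 * m + 1) :=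
  Finset.prod_range_succ _ m

/-- For `n ≥ 0`, `k ≥ 0` and positive integers `k₀, k₁, …, kₙ`, with
`g = (k+1) + k₀ + k₁ + ⋯ + kₙ − n`, the double-factorial identity
`(2g+n−1)!·(2g−1)!!/((2g−1)!·(2k+1)!!·∏_{i=0}^{n}(2kᵢ−1)!!)
 = ((2k+2k₀+1)!!/((2k+1)!!·(2k₀−1)!!))·(2g+n−2)!·(2g−1)!!/((2g−1)!·(2k₀+2k−1)!!·∏_{i=1}^{n}(2kᵢ−1)!!)
 + Σᵢ ((2k+2kᵢ−1)!!/((2k+1)!!·(2kᵢ−3)!!))·(2g+n−2)!·(2g−1)!!/((2g−1)!·(2(kᵢ+k)−1)!!·∏_{j≠i}(2kⱼ−1)!!)`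
holds in `ℚ`. -/
theorem double_factorial_recursion_identity
    (n k k₀ : ℕ) (K : Fin n → ℕ) (hk₀ : 0 < k₀) (hK : ∀ i, 0 < K i)
    (g : ℕ) (hg : g = (k + 1) + k₀ + ∑ i, K i - n) :
    ((2 * g + n - 1)! : ℚ) * oddDoubleFactorial g /
        (((2 * g - 1)! : ℚ) * oddDoubleFactorial (k + 1) *
          (oddDoubleFactorial k₀ * ∏ i, (oddDoubleFactorial (K i) : ℚ))) =
      ((oddDoubleFactorial (k + k₀ + 1) : ℚ) /
          (oddDoubleFactorial (k + 1) * oddDoubleFactorial k₀)) *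
        (((2 * g + n - 2)! : ℚ) * oddDoubleFactorial g /
          (((2 * g - 1)! : ℚ) * oddDoubleFactorial (k₀ + k) *
            ∏ i, (oddDoubleFactorial (K i) : ℚ)))
      + ∑ i, ((oddDoubleFactorial (k + K i) : ℚ) /
            (oddDoubleFactorial (k + 1) * oddDoubleFactorial (K i - 1))) *
          (((2 * g + n - 2)! : ℚ) * oddDoubleFactorial g /
            (((2 * g - 1)! : ℚ) * oddDoubleFactorial (K i + k) *
              (oddDoubleFactorial k₀ *
                ∏ j ∈ Finset.univ.erase i, (oddDoubleFactorial (K j) : ℚ)))) := by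
  have hS : n ≤ ∑ i, K i := by
    calc (n : ℕ) = ∑ _i : Fin n, 1 := by simp
    _ ≤ ∑ i, K i := Finset.sum_le_sum fun i _ => hK i
  have hgn : g + n = k + 1 + k₀ + ∑ i, K i := by omega
  have hfac1 : ((2 * g - 1)! : ℚ) ≠ 0 := by exact_mod_cast (Nat.factorial_pos _).ne'
  have hfac2 : ((2 * g + n - 2)! : ℚ) ≠ 0 := by exact_mod_cast (Nat.factorial_pos _).ne'
  have hprod : (∏ i, (oddDoubleFactorial (K i) : ℚ)) ≠ 0 :=
    Finset.prod_ne_zero_iff.2 fun i _ => odf_ne _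
  set A : ℚ := ((2 * g + n - 2)! : ℚ) * oddDoubleFactorial g /
      (((2 * g - 1)! : ℚ) * oddDoubleFactorial (k + 1) *
        (oddDoubleFactorial k₀ * ∏ i, (oddDoubleFactorial (K i) : ℚ))) with hA
  -- LHS
  have hf : (2 * g + n - 1)! = (2 * g + n - 1) * (2 * g + n - 2)! := by
    have h : 2 * g + n - 1 = (2 * g + n - 2) + 1 := by omega
    rw [h, Nat.factorial_succ]
  have hL : ((2 * g + n - 1)! : ℚ) * oddDoubleFactorial g /
        (((2 * g - 1)! : ℚ) * oddDoubleFactorial (k + 1) *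
          (oddDoubleFactorial k₀ * ∏ i, (oddDoubleFactorial (K i) : ℚ)))
      = ((2 * g + n - 1 : ℕ) : ℚ) * A := by
    rw [hf, hA]; push_cast; ring
  -- first RHS term
  have h0 : oddDoubleFactorial (k + k₀ + 1) = oddDoubleFactorial (k₀ + k) * (2 * (k₀ + k) + 1) := by
    rw [show k + k₀ + 1 = (k₀ + k) + 1 by ring, odf_succ]
  have hT0 : ((oddDoubleFactorial (k + k₀ + 1) : ℚ) /
          (oddDoubleFactorial (k + 1) * oddDoubleFactorial k₀)) *
        (((2 * g + n - 2)! : ℚ) * oddDoubleFactorial g /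
          (((2 * g - 1)! : ℚ) * oddDoubleFactorial (k₀ + k) *
            ∏ i, (oddDoubleFactorial (K i) : ℚ)))
      = (2 * (k₀ : ℚ) + 2 * k + 1) * A := by
    have ha := odf_ne (k + 1)
    have hb := odf_ne k₀
    have hc := odf_ne (k₀ + k)
    rw [h0, hA]
    push_cast
    field_simp
  -- summand terms
  have hT : ∀ i : Fin n, ((oddDoubleFactorial (k + K i) : ℚ) /
            (oddDoubleFactorial (k + 1) * oddDoubleFactorial (K i - 1))) *
          (((2 * g + n - 2)! : ℚ) * oddDoubleFactorial g /
            (((2 * g - 1)! : ℚ) * oddDoubleFactorial (K i + k) *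
              (oddDoubleFactorial k₀ *
                ∏ j ∈ Finset.univ.erase i, (oddDoubleFactorial (K j) : ℚ))))
      = (2 * (K i : ℚ) - 1) * A := by
    intro i
    have hKi := hK i
    have hsplit : oddDoubleFactorial (K i) = oddDoubleFactorial (K i - 1) * (2 * (K i - 1) + 1) := by
      conv_lhs => rw [show K i = (K i - 1) + 1 by omega]
      rw [odf_succ]
    have hsplitQ : (oddDoubleFactorial (K i) : ℚ)
        = (oddDoubleFactorial (K i - 1) : ℚ) * (2 * (K i : ℚ) - 1) := by
      rw [hsplit]
      push_cast [Nat.cast_sub (hK i)]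
      ring
    have hne : (2 * (K i : ℚ) - 1) ≠ 0 := by
      have h1 : (1 : ℚ) ≤ (K i : ℚ) := by exact_mod_cast hK i
      intro h; linarith
    have hperase : (∏ j, (oddDoubleFactorial (K j) : ℚ))
        = (oddDoubleFactorial (K i) : ℚ) * ∏ j ∈ Finset.univ.erase i, (oddDoubleFactorial (K j) : ℚ) :=
      (Finset.mul_prod_erase Finset.univ _ (Finset.mem_univ i)).symm
    have hc : ((2 * (K i - 1) + 1 : ℕ) : ℚ) = 2 * (K i : ℚ) - 1 := by
      have := hK i
      push_cast [Nat.cast_sub this]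
      ring
    have hperase' : (∏ j ∈ Finset.univ.erase i, (oddDoubleFactorial (K j) : ℚ)) ≠ 0 :=
      Finset.prod_ne_zero_iff.2 fun j _ => odf_ne _
    have ha := odf_ne (k + 1)
    have hb := odf_ne k₀
    have hd := odf_ne (K i + k)
    have he := odf_ne (K i - 1)
    rw [hA, hperase, hsplitQ, show k + K i = K i + k from Nat.add_comm k (K i)]
    field_simp
  rw [hL, hT0, Finset.sum_congr rfl (fun i _ => hT i), ← Finset.sum_mul, ← add_mul]
  congr 1
  have h1 : ((2 * g + n - 1 : ℕ) : ℚ) = 2 * (g : ℚ) + n - 1 := by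
    rw [Nat.cast_sub (by omega)]; push_cast; ring
  have h2 : ((g : ℚ) + n = k + 1 + k₀ + ∑ i, (K i : ℚ)) := by
    exact_mod_cast congrArg (Nat.cast : ℕ → ℚ) hgn
  have h3 : ∑ i : Fin n, (2 * (K i : ℚ) - 1) = 2 * (∑ i, (K i : ℚ)) - n := by
    rw [Finset.sum_sub_distrib, ← Finset.mul_sum]
    simp
  rw [h1, h3]
  linarith
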